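/- arXiv:2503.11271 — 2 statements merged into one kernel-verified Lean document; each statement's English description precedes it below -/
import Mathlib

section
/- Let X_1,…,X_n be real-valued random variables and Θ_1,…,Θ_n non-negative random variables, each non-degenerate at zero, satisfying Assumption A2 with functions g_{ij}. Then E[g_{ij}(Θ_i,Θ_j)] = 1 for every pair 1≤i≠j≤n. -/
/-!
By the Besicovitch differentiation theorem, the conditional probabilities of Assumption A2, taken
as limits over shrinking boxes, are almost surely the Radon–Nikodym density of the law of
`(Θi, Θj)` on the event `{|Xi| > x₁, Xj > x₂}` with respect to the law of `(Θi, Θj)`, so they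
integrate to `P[|Xi| > x₁, Xj > x₂]`. At thresholds where A2 holds up to a factor `1 ± ε`,
integrating gives `(1 - ε) E[gij(Θi, Θj)] ≤ 1 ≤ (1 + ε) E[gij(Θi, Θj)]`; let `ε → 0`.
-/

open MeasureTheory ProbabilityTheory Filter Topology Set

noncomputable section

namespace RWS

variable {Ω : Type} [MeasurableSpace Ω]

/-- The probability of an event, as a real number. -/
def pr (μ : Measure Ω) (s : Set Ω) : ℝ := (μ s).toReal

/-- The tail function `x ↦ P[X > x]` of a real-valued random variable `X`. -/
def tail (μ : Measure Ω) (X : Ω → ℝ) (x : ℝ) : ℝ := pr μ {ω | X ω > x}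

/-- The support of (the distribution of) a real-valued random variable. -/
def supp (μ : Measure Ω) (Θ : Ω → ℝ) : Set ℝ :=
  {θ : ℝ | ∀ δ > 0, 0 < μ {ω | Θ ω ∈ Icc (θ - δ) (θ + δ)}}

/-- `Θ` is non-degenerate at zero. -/
def NonDegAtZero (μ : Measure Ω) (Θ : Ω → ℝ) : Prop := 0 < μ {ω | Θ ω ≠ 0}

/-- `c` is the conditional probability of the event `A` given `Θ = θ`, defined as the limit
as `δ ↓ 0` of the probability of `A` conditioned on `Θ ∈ [θ-δ, θ+δ]`. -/
def IsCondProb (μ : Measure Ω) (Θ : Ω → ℝ) (A : Set Ω) (θ c : ℝ) : Prop :=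
  Tendsto (fun δ : ℝ =>
      pr μ (A ∩ {ω | Θ ω ∈ Icc (θ - δ) (θ + δ)}) / pr μ {ω | Θ ω ∈ Icc (θ - δ) (θ + δ)})
    (nhdsWithin 0 (Ioi 0)) (nhds c)

/-- `c` is the conditional probability of `A` given `Θi = θi, Θj = θj`, defined as the limit
as `δ ↓ 0` of the probability of `A` conditioned on `Θi ∈ [θi-δ, θi+δ], Θj ∈ [θj-δ, θj+δ]`. -/
def IsCondProb2 (μ : Measure Ω) (Θi Θj : Ω → ℝ) (A : Set Ω) (θi θj c : ℝ) : Prop :=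
  Tendsto (fun δ : ℝ =>
      pr μ (A ∩ {ω | Θi ω ∈ Icc (θi - δ) (θi + δ) ∧ Θj ω ∈ Icc (θj - δ) (θj + δ)}) /
        pr μ {ω | Θi ω ∈ Icc (θi - δ) (θi + δ) ∧ Θj ω ∈ Icc (θj - δ) (θj + δ)})
    (nhdsWithin 0 (Ioi 0)) (nhds c)

/-- The distribution of `X` under `μ` has a dominatedly varying tail (class `𝒟`). -/
def DomVar (μ : Measure Ω) (X : Ω → ℝ) : Prop :=
  ∀ b ∈ Ioo (0:ℝ) 1,
    IsBoundedUnder (· ≤ ·) atTop (fun x => tail μ X (b * x) / tail μ X x)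

/-- The distribution of `X` under `μ` is long-tailed (class `ℒ`). -/
def LongTail (μ : Measure Ω) (X : Ω → ℝ) : Prop :=
  ∀ a > (0:ℝ), Tendsto (fun x => tail μ X (x - a) / tail μ X x) atTop (nhds 1)

/-- The distribution of `X` under `μ` is consistently varying (class `𝒞`). -/
def ConsVar (μ : Measure Ω) (X : Ω → ℝ) : Prop :=
  Tendsto (fun v : ℝ => limsup (fun x => tail μ X (v * x) / tail μ X x) atTop)
    (nhdsWithin 1 (Iio 1)) (nhds 1)

/-- The distribution of `X` under `μ` is regularly varying with index `-α` (class `ℛ₋α`). -/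
def RegVar (μ : Measure Ω) (X : Ω → ℝ) (α : ℝ) : Prop :=
  ∀ b > (0:ℝ), Tendsto (fun x => tail μ X (b * x) / tail μ X x) atTop (nhds (b ^ (-α)))

/-- The `L`-index `L_F = lim_{v↓1} liminf_{x→∞} F̄(vx)/F̄(x)` of the distribution of `X`. -/
def Lindex (μ : Measure Ω) (X : Ω → ℝ) : ℝ :=
  limUnder (nhdsWithin 1 (Ioi 1))
    (fun v => liminf (fun x => tail μ X (v * x) / tail μ X x) atTop)

/-- `Xi` and `Xj` are tail asymptotically independent:
`P[|Xi| > xi | Xj > xj] → 0` as `xi ∧ xj → ∞`. -/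
def TAIpair (μ : Measure Ω) (Xi Xj : Ω → ℝ) : Prop :=
  Tendsto (fun p : ℝ × ℝ =>
      pr μ {ω | |Xi ω| > p.1 ∧ Xj ω > p.2} / pr μ {ω | Xj ω > p.2})
    (atTop ×ˢ atTop) (nhds 0)

/-- `Xi` and `Xj` are quasi-asymptotically independent. -/
def QAIpair (μ : Measure Ω) (Xi Xj : Ω → ℝ) : Prop :=
  Tendsto (fun x : ℝ =>
      pr μ {ω | max (Xi ω) 0 > x ∧ max (Xj ω) 0 > x} / (tail μ Xi x + tail μ Xj x))
    atTop (nhds 0) ∧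
  Tendsto (fun x : ℝ =>
      pr μ {ω | max (-Xi ω) 0 > x ∧ Xj ω > x} / (tail μ Xi x + tail μ Xj x))
    atTop (nhds 0)

/-- The requirements on an auxiliary function `b` from Assumption A1:
`b > 0`, `b(x) → ∞` and `b(x)/x → 0`. -/
def A1fun (b : ℝ → ℝ) : Prop :=
  (∀ x, 0 < b x) ∧ Tendsto b atTop atTop ∧ Tendsto (fun x => b x / x) atTop (nhds 0)

/-- The little-o condition of Assumption A1 for the ordered pair `(Xi, Θi), (Xj, Θj)`:
`P[Θi > bi(xi)] = o(P[Θi Xi > xi, Θj Xj > xj])` as `xi ∧ xj → ∞`. -/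
def A1pair (μ : Measure Ω) (Xi Θi Xj Θj : Ω → ℝ) (bi : ℝ → ℝ) : Prop :=
  Tendsto (fun p : ℝ × ℝ =>
      pr μ {ω | Θi ω > bi p.1} /
        pr μ {ω | Θi ω * Xi ω > p.1 ∧ Θj ω * Xj ω > p.2})
    (atTop ×ˢ atTop) (nhds 0)

/-- Assumption A2 for an ordered pair, with function `gij`:
`P[|Xi| > xi, Xj > xj | Θi = θi, Θj = θj] ~ gij(θi,θj) ⬝ P[|Xi| > xi, Xj > xj]`
as `xi ∧ xj → ∞`, uniformly over the supports. -/
def A2pair (μ : Measure Ω) (Xi Θi Xj Θj : Ω → ℝ) (gij : ℝ → ℝ → ℝ) : Prop :=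
  Measurable (Function.uncurry gij) ∧
  (∀ θi θj : ℝ, 0 ≤ θi → 0 ≤ θj → 0 < gij θi θj) ∧
  ∃ cp : ℝ → ℝ → ℝ → ℝ → ℝ,
    (∀ θi ∈ supp μ Θi, ∀ θj ∈ supp μ Θj, ∀ xi xj : ℝ,
      IsCondProb2 μ Θi Θj {ω | |Xi ω| > xi ∧ Xj ω > xj} θi θj (cp θi θj xi xj)) ∧
    TendstoUniformlyOn
      (fun (x : ℝ × ℝ) (θ : ℝ × ℝ) =>
        cp θ.1 θ.2 x.1 x.2 / (gij θ.1 θ.2 * pr μ {ω | |Xi ω| > x.1 ∧ Xj ω > x.2}))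
      (fun _ => 1) (atTop ×ˢ atTop) (supp μ Θi ×ˢ supp μ Θj)

/-- Assumption A3 (A3') for a single pair `(X, Θ)` with function `h`:
`P[X > x | Θ = θ] ~ h(θ) ⬝ P[X > x]` as `x → ∞`, uniformly over the support of `Θ`. -/
def A3' (μ : Measure Ω) (X Θ : Ω → ℝ) (h : ℝ → ℝ) : Prop :=
  (∀ θ : ℝ, 0 ≤ θ → 0 < h θ) ∧
  ∃ cp : ℝ → ℝ → ℝ,
    (∀ θ ∈ supp μ Θ, ∀ x : ℝ, IsCondProb μ Θ {ω | X ω > x} θ (cp θ x)) ∧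
    TendstoUniformlyOn (fun (x : ℝ) (θ : ℝ) => cp θ x / (h θ * tail μ X x))
      (fun _ => 1) atTop (supp μ Θ)

/-- The additional two-sided uniform asymptotic bounds of Assumption A4, for one ordered
pair, with constants `L ≤ U`:
`L gij(θi,θj) P[Xi > xi, Xj > xj] ≲ P[Xi > xi, Xj > xj | Θi = θi, Θj = θj]
   ≲ U gij(θi,θj) P[Xi > xi, Xj > xj]` as `xi ∧ xj → ∞`, uniformly over the supports. -/
def A4pair (μ : Measure Ω) (Xi Θi Xj Θj : Ω → ℝ) (gij : ℝ → ℝ → ℝ) (L U : ℝ) : Prop :=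
  ∃ cp : ℝ → ℝ → ℝ → ℝ → ℝ,
    (∀ θi ∈ supp μ Θi, ∀ θj ∈ supp μ Θj, ∀ xi xj : ℝ,
      IsCondProb2 μ Θi Θj {ω | Xi ω > xi ∧ Xj ω > xj} θi θj (cp θi θj xi xj)) ∧
    ∀ ε > (0:ℝ), ∀ᶠ x : ℝ × ℝ in atTop ×ˢ atTop,
      ∀ θi ∈ supp μ Θi, ∀ θj ∈ supp μ Θj,
        (1 - ε) * (L * (gij θi θj * pr μ {ω | Xi ω > x.1 ∧ Xj ω > x.2})) ≤
            cp θi θj x.1 x.2 ∧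
          cp θi θj x.1 x.2 ≤
            (1 + ε) * (U * (gij θi θj * pr μ {ω | Xi ω > x.1 ∧ Xj ω > x.2}))

/-- Assumption A1 for a finite family. -/
def A1 (μ : Measure Ω) {n : ℕ} (X Θ : Fin n → Ω → ℝ) (b : Fin n → ℝ → ℝ) : Prop :=
  (∀ i, A1fun (b i)) ∧
  ∀ i j, i ≠ j → A1pair μ (X i) (Θ i) (X j) (Θ j) (b i)

/-- Assumption A2 for a finite family. -/
def A2 (μ : Measure Ω) {n : ℕ} (X Θ : Fin n → Ω → ℝ)
    (g : Fin n → Fin n → ℝ → ℝ → ℝ) : Prop :=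
  ∀ i j, i ≠ j → A2pair μ (X i) (Θ i) (X j) (Θ j) (g i j)

/-- Assumption A3 for a finite family. -/
def A3 (μ : Measure Ω) {n : ℕ} (X Θ : Fin n → Ω → ℝ) (h : Fin n → ℝ → ℝ) : Prop :=
  ∀ i, A3' μ (X i) (Θ i) (h i)

/-- Assumption A4 for a finite family. -/
def A4 (μ : Measure Ω) {n : ℕ} (X Θ : Fin n → Ω → ℝ)
    (g : Fin n → Fin n → ℝ → ℝ → ℝ) : Prop :=
  A2 μ X Θ g ∧
  ∃ L U : ℝ, 0 < L ∧ L ≤ U ∧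
    ∀ i j, i ≠ j → A4pair μ (X i) (Θ i) (X j) (Θ j) (g i j) L U

/-- Pairwise tail asymptotic independence of a finite family. -/
def pTAI (μ : Measure Ω) {n : ℕ} (X : Fin n → Ω → ℝ) : Prop :=
  ∀ i j, i ≠ j → TAIpair μ (X i) (X j)

/-- Pairwise quasi-asymptotic independence of a finite family. -/
def pQAI (μ : Measure Ω) {n : ℕ} (X : Fin n → Ω → ℝ) : Prop :=
  ∀ i j, i ≠ j → QAIpair μ (X i) (X j)

/-- The randomly weighted and stopped sum `S_N^Θ`. -/
def SNsum (Θs Xs : ℕ → Ω → ℝ) (N : Ω → ℕ) (ω : Ω) : ℝ :=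
  ∑ i ∈ Finset.range (N ω), Θs i ω * Xs i ω

/-- The randomly stopped maximum of weighted sums `S_(N)^Θ` (equal to `0` when `N = 0`). -/
def SNmax (Θs Xs : ℕ → Ω → ℝ) (N : Ω → ℕ) (ω : Ω) : ℝ :=
  ⨆ k ∈ Finset.range (N ω), ∑ i ∈ Finset.range (k + 1), Θs i ω * Xs i ω

/-- The randomly stopped maximum of weighted summands `X_(N)^Θ` (equal to `0` when `N = 0`). -/
def XNmax (Θs Xs : ℕ → Ω → ℝ) (N : Ω → ℕ) (ω : Ω) : ℝ :=
  ⨆ i ∈ Finset.range (N ω), Θs i ω * Xs i ω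

lemma supp_eq_support_map {μ : Measure Ω} {Θ : Ω → ℝ} (hΘ : Measurable Θ) :
    supp μ Θ = (μ.map Θ).support := by
  ext θ
  rw [Metric.nhds_basis_closedBall.mem_measureSupport]
  simp only [supp, Real.closedBall_eq_Icc, Measure.map_apply hΘ measurableSet_Icc]
  rfl

lemma ae_mem_supp (μ : Measure Ω) {Θ : Ω → ℝ} (hΘ : Measurable Θ) :
    ∀ᵐ ω ∂μ, Θ ω ∈ supp μ Θ := by
  rw [supp_eq_support_map hΘ]
  exact ae_of_ae_map hΘ.aemeasurable Measure.support_mem_ae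

section Density

variable {β : Type*} [MetricSpace β] [MeasurableSpace β] [BorelSpace β]
  [SecondCountableTopology β] [HasBesicovitchCovering β]

lemma exists_density_ae_tendsto_condProb (μ : Measure Ω) [IsFiniteMeasure μ] {T : Ω → β}
    (hT : Measurable T) (A : Set Ω) :
    ∃ f : β → ℝ, (∀ t, 0 ≤ f t) ∧ Integrable (fun ω => f (T ω)) μ ∧
      ∫ ω, f (T ω) ∂μ = pr μ A ∧
      ∀ᵐ ω ∂μ, Tendsto (fun δ => pr μ (A ∩ T ⁻¹' Metric.closedBall (T ω) δ) /
        pr μ (T ⁻¹' Metric.closedBall (T ω) δ)) (𝓝[>] 0) (𝓝 (f (T ω))) := by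
  set ν := μ.map T
  set ρ := (μ.restrict A).map T
  have hρν : ρ ≪ ν := Measure.restrict_le_self.absolutelyContinuous.map hT
  have hρ_ball : ∀ t δ, ρ (Metric.closedBall t δ) = μ (A ∩ T ⁻¹' Metric.closedBall t δ) :=
    fun t δ => by
      rw [Measure.map_apply hT measurableSet_closedBall,
        Measure.restrict_apply (hT measurableSet_closedBall), inter_comm]
  have hν_ball : ∀ t δ, ν (Metric.closedBall t δ) = μ (T ⁻¹' Metric.closedBall t δ) :=
    fun t δ => Measure.map_apply hT measurableSet_closedBall
  refine ⟨fun t => (ρ.rnDeriv ν t).toReal, fun t => ENNReal.toReal_nonneg,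
    Measure.integrable_toReal_rnDeriv.comp_measurable hT, ?_, ?_⟩
  · rw [← integral_map hT.aemeasurable
      (Measure.measurable_rnDeriv ρ ν).ennreal_toReal.aestronglyMeasurable,
      Measure.integral_toReal_rnDeriv hρν, measureReal_def,
      Measure.map_apply hT MeasurableSet.univ, preimage_univ, Measure.restrict_apply_univ]
    rfl
  · have h_ae_law : ∀ᵐ t ∂ν, Tendsto (fun δ => pr μ (A ∩ T ⁻¹' Metric.closedBall t δ) /
        pr μ (T ⁻¹' Metric.closedBall t δ)) (𝓝[>] 0) (𝓝 (ρ.rnDeriv ν t).toReal) := by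
      filter_upwards [Besicovitch.ae_tendsto_rnDeriv ρ ν, Measure.rnDeriv_lt_top ρ ν]
        with t hlim hfin
      refine ((ENNReal.tendsto_toReal hfin.ne).comp hlim).congr fun δ => ?_
      simp only [Function.comp, ENNReal.toReal_div, hρ_ball, hν_ball, pr]
    exact ae_of_ae_map hT.aemeasurable h_ae_law

end Density

-- In the sup metric of `ℝ × ℝ` closed balls are the boxes of `IsCondProb2`.
lemma isCondProb2_iff_tendsto_closedBall {μ : Measure Ω} {Θi Θj : Ω → ℝ} {A : Set Ω}
    {θi θj c : ℝ} :
    IsCondProb2 μ Θi Θj A θi θj c ↔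
      Tendsto (fun δ => pr μ (A ∩ (fun ω => (Θi ω, Θj ω)) ⁻¹' Metric.closedBall (θi, θj) δ) /
        pr μ ((fun ω => (Θi ω, Θj ω)) ⁻¹' Metric.closedBall (θi, θj) δ)) (𝓝[>] 0) (𝓝 c) := by
  simp only [← closedBall_prod_same, Real.closedBall_eq_Icc]
  rfl

lemma pos_and_bounds_of_dist_one_div_lt {c d ε : ℝ} (hc : 0 ≤ c) (hε : ε ≤ 1)
    (h : dist 1 (c / d) < ε) : 0 < d ∧ (1 - ε) * d < c ∧ c < (1 + ε) * d := by
  rw [Real.dist_eq, abs_lt] at h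
  have hd : 0 < d := by
    rcases div_pos_iff.mp (by linarith : 0 < c / d) with ⟨-, hd⟩ | ⟨hc', -⟩
    · exact hd
    · linarith
  exact ⟨hd, (lt_div_iff₀ hd).mp (by linarith), (div_lt_iff₀ hd).mp (by linarith)⟩

lemma A2pair.exists_integral_eq_one_and_bounds {μ : Measure Ω} [IsFiniteMeasure μ] [NeZero μ]
    {Xi Θi Xj Θj : Ω → ℝ} {gij : ℝ → ℝ → ℝ} (hA2 : A2pair μ Xi Θi Xj Θj gij)
    (hΘi : Measurable Θi) (hΘj : Measurable Θj) {ε : ℝ} (hε : ε ∈ Ioo (0 : ℝ) 1) :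
    ∃ f : Ω → ℝ, Integrable f μ ∧ ∫ ω, f ω ∂μ = 1 ∧
      ∀ᵐ ω ∂μ, (1 - ε) * gij (Θi ω) (Θj ω) ≤ f ω ∧ f ω ≤ (1 + ε) * gij (Θi ω) (Θj ω) := by
  obtain ⟨-, -, cp, hcp, hunif⟩ := hA2
  obtain ⟨x, hx⟩ := (Metric.tendstoUniformlyOn_iff.mp hunif ε hε.1).exists
  set P := pr μ {ω | |Xi ω| > x.1 ∧ Xj ω > x.2}
  obtain ⟨f, hf_nonneg, hf_int, hf_integral, hf_lim⟩ :=
    exists_density_ae_tendsto_condProb μ (hΘi.prodMk hΘj) {ω | |Xi ω| > x.1 ∧ Xj ω > x.2}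
  have hbounds : ∀ᵐ ω ∂μ, 0 < gij (Θi ω) (Θj ω) * P ∧
      (1 - ε) * (gij (Θi ω) (Θj ω) * P) < f (Θi ω, Θj ω) ∧
      f (Θi ω, Θj ω) < (1 + ε) * (gij (Θi ω) (Θj ω) * P) := by
    filter_upwards [ae_mem_supp μ hΘi, ae_mem_supp μ hΘj, hf_lim] with ω hi hj hlim
    have hcp_eq : cp (Θi ω) (Θj ω) x.1 x.2 = f (Θi ω, Θj ω) :=
      tendsto_nhds_unique (isCondProb2_iff_tendsto_closedBall.mp (hcp _ hi _ hj x.1 x.2)) hlim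
    exact pos_and_bounds_of_dist_one_div_lt (hf_nonneg _) hε.2.le
      (hcp_eq ▸ hx (Θi ω, Θj ω) ⟨hi, hj⟩)
  have hP : 0 < P := by
    obtain ⟨ω, hgP, -⟩ := hbounds.exists
    exact ENNReal.toReal_nonneg.lt_of_ne (right_ne_zero_of_mul hgP.ne').symm
  refine ⟨fun ω => f (Θi ω, Θj ω) / P, hf_int.div_const P, ?_, ?_⟩
  · rw [integral_div, hf_integral, div_self hP.ne']
  · filter_upwards [hbounds] with ω hω
    obtain ⟨-, hlo, hhi⟩ := hω
    rw [le_div_iff₀ hP, div_le_iff₀ hP, mul_assoc, mul_assoc]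
    exact ⟨hlo.le, hhi.le⟩

lemma integral_eq_one_of_forall_bounds {μ : Measure Ω} {g : Ω → ℝ}
    (hg : AEStronglyMeasurable g μ)
    (h : ∀ ε ∈ Ioo (0 : ℝ) 1, ∃ f : Ω → ℝ, Integrable f μ ∧ ∫ ω, f ω ∂μ = 1 ∧
      ∀ᵐ ω ∂μ, (1 - ε) * g ω ≤ f ω ∧ f ω ≤ (1 + ε) * g ω) :
    ∫ ω, g ω ∂μ = 1 := by
  have hg_int : Integrable g μ := by
    obtain ⟨f, hf, -, hfg⟩ := h (1 / 2) (by norm_num)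
    refine (hf.const_mul 2).mono' hg ?_
    filter_upwards [hfg] with ω hω
    obtain ⟨hlo, hhi⟩ := hω
    rw [Real.norm_eq_abs, abs_of_nonneg (by linarith)]
    linarith
  have hbounds : ∀ ε ∈ Ioo (0 : ℝ) 1,
      (1 - ε) * ∫ ω, g ω ∂μ ≤ 1 ∧ 1 ≤ (1 + ε) * ∫ ω, g ω ∂μ := by
    intro ε hε
    obtain ⟨f, hf, hf_one, hfg⟩ := h ε hε
    constructor
    · calc (1 - ε) * ∫ ω, g ω ∂μ = ∫ ω, (1 - ε) * g ω ∂μ := (integral_const_mul _ _).symm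
        _ ≤ ∫ ω, f ω ∂μ := integral_mono_ae (hg_int.const_mul _) hf (hfg.mono fun _ => And.left)
        _ = 1 := hf_one
    · calc 1 = ∫ ω, f ω ∂μ := hf_one.symm
        _ ≤ ∫ ω, (1 + ε) * g ω ∂μ :=
          integral_mono_ae hf (hg_int.const_mul _) (hfg.mono fun _ => And.right)
        _ = (1 + ε) * ∫ ω, g ω ∂μ := integral_const_mul _ _
  have hsmall : ∀ᶠ ε in 𝓝[>] (0 : ℝ), ε ∈ Ioo (0 : ℝ) 1 := Ioo_mem_nhdsGT one_pos
  have hlim : ∀ s : ℝ, Tendsto (fun ε => (1 + s * ε) * ∫ ω, g ω ∂μ) (𝓝[>] 0)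
      (𝓝 (∫ ω, g ω ∂μ)) := fun s => by
    refine tendsto_nhdsWithin_of_tendsto_nhds ?_
    exact (by fun_prop : Continuous fun ε : ℝ => (1 + s * ε) * ∫ ω, g ω ∂μ).tendsto' 0 _
      (by simp)
  refine le_antisymm (le_of_tendsto (hlim (-1)) ?_) (ge_of_tendsto (hlim 1) ?_)
  · filter_upwards [hsmall] with ε hε
    simpa [← sub_eq_add_neg] using (hbounds ε hε).1
  · filter_upwards [hsmall] with ε hε
    simpa using (hbounds ε hε).2

theorem statement_1_general
    (n : ℕ)
    (μ : Measure Ω) [IsProbabilityMeasure μ]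
    (X Θ : Fin n → Ω → ℝ)
    (hΘm : ∀ i, Measurable (Θ i))
    (g : Fin n → Fin n → ℝ → ℝ → ℝ) (hA2 : A2 μ X Θ g) :
    ∀ i j, i ≠ j → ∫ ω, g i j (Θ i ω) (Θ j ω) ∂μ = 1 := by
  intro i j hij
  have hA2ij := hA2 i j hij
  exact integral_eq_one_of_forall_bounds
    (hA2ij.1.comp ((hΘm i).prodMk (hΘm j))).aestronglyMeasurable
    fun ε hε => hA2ij.exists_integral_eq_one_and_bounds (hΘm i) (hΘm j) hε

/-- under Assumption A2, `E[g i j (Θ i, Θ j)] = 1` for every pair `i ≠ j`. -/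
theorem statement_1
    (n : ℕ) (hn : 0 < n)
    (μ : Measure Ω) [IsProbabilityMeasure μ]
    (X Θ : Fin n → Ω → ℝ)
    (hXm : ∀ i, Measurable (X i)) (hΘm : ∀ i, Measurable (Θ i))
    (hF : ∀ i, ∀ x : ℝ, 0 ≤ x → 0 < tail μ (X i) x)
    (hΘnn : ∀ i ω, 0 ≤ Θ i ω)
    (hΘnd : ∀ i, NonDegAtZero μ (Θ i))
    (g : Fin n → Fin n → ℝ → ℝ → ℝ) (hA2 : A2 μ X Θ g) :
    ∀ i j, i ≠ j → ∫ ω, g i j (Θ i ω) (Θ j ω) ∂μ = 1 :=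
  statement_1_general n μ X Θ hΘm g hA2

end RWS
end
end

section
/- Let X_1,…,X_n be real-valued random variables and Θ_1,…,Θ_n non-negative random variables, each non-degenerate at zero, satisfying Assumption A2 with functions g_{ij}. Then for every pair 1≤i≠j≤n there exists a constant K_{ij}>0 such that g_{ij}(θ_i,θ_j) ≤ K_{ij} for all (θ_i,θ_j) in the product of the supports of Θ_i and Θ_j. -/
open MeasureTheory ProbabilityTheory Filter Topology Set

noncomputable section

namespace RWS

variable {Ω : Type} [MeasurableSpace Ω]

lemma supp_nonneg' {μ : Measure Ω} {Θ : Ω → ℝ} (hΘ : ∀ ω, 0 ≤ Θ ω) {θ : ℝ}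
    (hθ : θ ∈ supp μ Θ) : 0 ≤ θ := by
  by_contra h
  push_neg at h
  have hδ : (0:ℝ) < -θ / 2 := by linarith
  have hpos := hθ (-θ / 2) hδ
  have hempty : {ω | Θ ω ∈ Icc (θ - -θ / 2) (θ + -θ / 2)} = (∅ : Set Ω) := by
    ext ω
    simp only [mem_Icc, mem_setOf_eq, mem_empty_iff_false, iff_false, not_and]
    intro _
    have := hΘ ω
    intro h2
    linarith
  rw [hempty] at hpos
  simp at hpos

/-- under Assumption A2, each `g i j` is bounded on the product of the
supports of `Θ i` and `Θ j`. -/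
theorem statement_2
    (n : ℕ) (hn : 0 < n)
    (μ : Measure Ω) [IsProbabilityMeasure μ]
    (X Θ : Fin n → Ω → ℝ)
    (hXm : ∀ i, Measurable (X i)) (hΘm : ∀ i, Measurable (Θ i))
    (hF : ∀ i, ∀ x : ℝ, 0 ≤ x → 0 < tail μ (X i) x)
    (hΘnn : ∀ i ω, 0 ≤ Θ i ω)
    (hΘnd : ∀ i, NonDegAtZero μ (Θ i))
    (g : Fin n → Fin n → ℝ → ℝ → ℝ) (hA2 : A2 μ X Θ g) :
    ∀ i j, i ≠ j → ∃ K : ℝ, 0 < K ∧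
      ∀ θi ∈ supp μ (Θ i), ∀ θj ∈ supp μ (Θ j), g i j θi θj ≤ K := by
  intro i j hij
  obtain ⟨hmeas, hgpos, cp, hcp, hunif⟩ := hA2 i j hij
  have h12 : (0:ℝ) < 1 / 2 := by norm_num
  obtain ⟨x, hx⟩ := ((Metric.tendstoUniformlyOn_iff.mp hunif) (1 / 2) h12).exists
  set P : ℝ := pr μ {ω | |X i ω| > x.1 ∧ X j ω > x.2} with hP
  refine ⟨max 1 (2 / P), lt_of_lt_of_le one_pos (le_max_left _ _), ?_⟩
  intro θi hθi θj hθj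
  have hθi0 : 0 ≤ θi := supp_nonneg' (hΘnn i) hθi
  have hθj0 : 0 ≤ θj := supp_nonneg' (hΘnn j) hθj
  have hg := hgpos θi θj hθi0 hθj0
  have hdist := hx (θi, θj) ⟨hθi, hθj⟩
  have hy : 1 / 2 < cp θi θj x.1 x.2 / (g i j θi θj * P) := by
    rw [Real.dist_eq, abs_lt] at hdist
    linarith [hdist.1, hdist.2]
  -- cp is at most 1
  have hcple : cp θi θj x.1 x.2 ≤ 1 := by
    refine le_of_tendsto (hcp θi hθi θj hθj x.1 x.2) ?_
    filter_upwards with δ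
    refine div_le_one_of_le₀ ?_ ENNReal.toReal_nonneg
    exact ENNReal.toReal_mono (measure_ne_top μ _) (measure_mono (inter_subset_right))
  have hPnn : 0 ≤ P := ENNReal.toReal_nonneg
  have hD : 0 < g i j θi θj * P := by
    rcases lt_or_eq_of_le (mul_nonneg hg.le hPnn) with h | h
    · exact h
    · rw [← h, div_zero] at hy; linarith
  have hPpos : 0 < P := by nlinarith
  have hlt : 1 / 2 * (g i j θi θj * P) < cp θi θj x.1 x.2 := (lt_div_iff₀ hD).mp hy
  have hgP : g i j θi θj * P ≤ 2 := by linarith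
  have : g i j θi θj ≤ 2 / P := (le_div_iff₀ hPpos).mpr hgP
  exact this.trans (le_max_right _ _)

end RWS
end
end
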